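/- Let d ≥ 1, let X be a finite nonempty subset of Ω(d), and let t be a positive integer. Then X is a complex spherical 𝒯-design for 𝒯 = {(k,l) ∈ ℕ×ℕ : k+l ≤ t} if and only if φ(X) is a real spherical t-design on the unit sphere S^{2d−1} ⊆ ℝ^{2d}, where φ : ℂ^d → ℝ^{2d} is given by φ(x₁,…,x_d) = (Re x₁, Im x₁, …, Re x_d, Im x_d). -/

import Mathlib

open Finset

/-- The Hermitian inner product `x^* y = ∑ i, conj (x i) * y i` on `ℂ^d`. -/
noncomputable def cInner {d : ℕ} (x y : Fin d → ℂ) : ℂ :=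
  ∑ i, (starRingEnd ℂ) (x i) * y i

/-- A lower set in `ℕ × ℕ` with respect to the product order. -/
def IsLowerSet' (T : Finset (ℕ × ℕ)) : Prop :=
  ∀ kl ∈ T, ∀ mn : ℕ × ℕ, mn.1 ≤ kl.1 → mn.2 ≤ kl.2 → mn ∈ T

/-- The average over the unit sphere `Ω(d)` of the monomial
`z ↦ ∏ i, z i ^ a i * conj (z i) ^ b i`. -/
noncomputable def monomialAvg (d : ℕ) (a b : Fin d → ℕ) : ℂ :=
  if a = b then
    ((Nat.factorial (d - 1) : ℂ) * ∏ i, (Nat.factorial (a i) : ℂ)) /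
      (Nat.factorial (d + (∑ i, a i) - 1) : ℂ)
  else 0

/-- `X` is a complex spherical `T`-design: every monomial of bidegree `(k,l) ∈ T`
has the same average over `X` as over the sphere `Ω(d)`. -/
def IsDesign (d : ℕ) (X : Finset (Fin d → ℂ)) (T : Finset (ℕ × ℕ)) : Prop :=
  ∀ kl ∈ T, ∀ a b : Fin d → ℕ, (∑ i, a i) = kl.1 → (∑ i, b i) = kl.2 →
    (∑ z ∈ X, (∏ i, (z i) ^ (a i)) * ∏ i, ((starRingEnd ℂ) (z i)) ^ (b i))
      = (X.card : ℂ) * monomialAvg d a b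

/-- The Jacobi polynomial `g_{k,l}` for the complex sphere in dimension `d`. -/
noncomputable def jacobi (d k l : ℕ) (x : ℂ) : ℂ :=
  (((d + k + l - 1 : ℕ) : ℂ) / (Nat.factorial (d - 1) : ℂ)) *
    ∑ r ∈ Finset.range (min k l + 1),
      (((-1 : ℂ) ^ r * (Nat.factorial (d + k + l - r - 2) : ℂ)) /
          ((Nat.factorial r : ℂ) * (Nat.factorial (k - r) : ℂ) *
            (Nat.factorial (l - r) : ℂ))) *
        x ^ (k - r) * ((starRingEnd ℂ) x) ^ (l - r)

open scoped Classical in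
/-- The inner product set `A(X) = {x^* y : x, y ∈ X, x ≠ y}`. -/
noncomputable def innerSet {d : ℕ} (X : Finset (Fin d → ℂ)) : Finset ℂ :=
  ((X ×ˢ X).filter fun p => p.1 ≠ p.2).image fun p => cInner p.1 p.2

/-- `m_{k,l}`, the dimension of the harmonic space `Harm(k,l)` in dimension `d`. -/
def mdim (d k l : ℕ) : ℕ :=
  (d + k - 1).choose (d - 1) * (d + l - 1).choose (d - 1) -
    (d + k - 2).choose (d - 1) * (d + l - 2).choose (d - 1)

/-- The convolution `U * V = {(k + l', k' + l) : (k,l) ∈ U, (k',l') ∈ V}`. -/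
def convSet (U V : Finset (ℕ × ℕ)) : Finset (ℕ × ℕ) :=
  (U ×ˢ V).image fun p => (p.1.1 + p.2.2, p.2.1 + p.1.2)

/-- `X` is an `S`-code: it has an annihilator polynomial supported on monomials
`x^k * conj x^l` with `(k,l) ∈ S`. -/
def IsCode (d : ℕ) (X : Finset (Fin d → ℂ)) (S : Finset (ℕ × ℕ)) : Prop :=
  ∃ c : ℕ × ℕ → ℝ,
    (∀ α ∈ innerSet X, ∑ kl ∈ S, (c kl : ℂ) * α ^ kl.1 * ((starRingEnd ℂ) α) ^ kl.2 = 0) ∧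
    0 < ∑ kl ∈ S, c kl

open scoped Classical

/-- `λ_{m,k} = k / (m + 2k - 2)` in the Gegenbauer recursion. -/
noncomputable def glam (m k : ℕ) : ℝ := (k : ℝ) / ((m : ℝ) + 2 * k - 2)

/-- The Gegenbauer polynomials `Q_{m,k}`. -/
noncomputable def gegen (m : ℕ) : ℕ → ℝ → ℝ
  | 0, _ => 1
  | 1, u => (m : ℝ) * u
  | (k + 2), u =>
      (u * gegen m (k + 1) u + (glam m k - 1) * gegen m k u) / glam m (k + 2)

/-- The embedding `φ : ℂ^d → ℝ^{2d}` sending `x` to the list of real and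
imaginary parts of its coordinates (indexed by `Fin d × Bool`). -/
noncomputable def phi (d : ℕ) (x : Fin d → ℂ) : Fin d × Bool → ℝ :=
  fun p => if p.2 then (x p.1).im else (x p.1).re

/-! Both conditions are conditions on the moments `R j = ∑_{x,y ∈ X} (Re x^*y)^j`, `j ≤ t`.

Real side: for any linear functional `L` on polynomials, the array `A j i = L (u^j Q_{m,i}(u))`
obeys a recurrence coming from the three-term recurrence of the `Q_{m,i}`, and is determined
both by its column `A j 0 = L (u^j)` and by its row `A 0 i = L (Q_{m,i})`. The array of the
sphere functional has an explicit closed form whose row vanishes for `i ≥ 1`. Comparing the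
array of `X × X` with `|X|²` times the sphere array, the moment condition `R j = |X|² ν_j` for
`j ≤ t` is equivalent to the Gegenbauer condition.

Complex side: expanding `(2 Re w)^j = ∑ C(j,k) w^k w̄^(j-k)` and the powers of `x^*y` by the
multinomial theorem gives `2^j (R j - |X|² ν_j) = ∑_k C(j,k) E(k, j-k)`, where `E(k,l) ≥ 0` is a
weighted sum of the squared deviations of the monomial sums of bidegree `(k,l)` from their
sphere averages; the cross terms vanish because `X` lies on the sphere. So the moments are
correct up to `t` exactly when all deviations of total degree `≤ t` vanish. -/

/-- `∫ uⁿ dσ` for a coordinate `u` on the unit sphere `S^{m-1}` with normalized measure `σ`. -/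
noncomputable def sphereMoment (m : ℕ) : ℕ → ℝ
  | 0 => 1
  | 1 => 0
  | n + 2 => (n + 1) / (m + n) * sphereMoment m n

theorem sphereMoment_two_mul_add_one (m s : ℕ) : sphereMoment m (2 * s + 1) = 0 := by
  induction s with
  | zero => rfl
  | succ s ih => rw [show 2 * (s + 1) + 1 = 2 * s + 1 + 2 by ring, sphereMoment, ih, mul_zero]

theorem mul_sphereMoment {m : ℕ} (hm : 0 < m) :
    ∀ n, (m : ℝ) * sphereMoment m n = (m + n) * sphereMoment (m + 2) n
  | 0 => by simp [sphereMoment]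
  | 1 => by simp [sphereMoment]
  | n + 2 => by
    have ih := mul_sphereMoment hm n
    have h₁ : (m : ℝ) + n ≠ 0 := by positivity
    have h₂ : ((m + 2 : ℕ) : ℝ) + n ≠ 0 := by positivity
    simp only [sphereMoment]
    rw [mul_left_comm, ih]
    push_cast at h₂ ⊢
    field_simp
    ring

theorem glam_add_two_pos (m k : ℕ) : 0 < glam m (k + 2) := by
  unfold glam
  push_cast
  exact div_pos (by positivity) (by linarith [(m.cast_nonneg : (0 : ℝ) ≤ m)])

theorem glam_mul_gegen_add_two (m k : ℕ) (u : ℝ) :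
    glam m (k + 2) * gegen m (k + 2) u = u * gegen m (k + 1) u + (glam m k - 1) * gegen m k u :=
  mul_div_cancel₀ _ (glam_add_two_pos m k).ne'

/-- The recurrence satisfied by `A j i = L (u^j * Q_{m,i}(u))` for any linear functional `L`. -/
def IsGegenbauerArray (m : ℕ) (A : ℕ → ℕ → ℝ) : Prop :=
  (∀ j, A j 1 = m * A (j + 1) 0) ∧
    ∀ j i, glam m (i + 2) * A j (i + 2) = A (j + 1) (i + 1) + (glam m i - 1) * A j i

namespace IsGegenbauerArray

variable {m : ℕ} {A B : ℕ → ℕ → ℝ}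

theorem const_mul (hA : IsGegenbauerArray m A) (c : ℝ) :
    IsGegenbauerArray m fun j i => c * A j i :=
  ⟨fun j => by simp only [hA.1 j]; ring, fun j i => by linear_combination c * hA.2 j i⟩

theorem eq_of_col (hA : IsGegenbauerArray m A) (hB : IsGegenbauerArray m B) {t : ℕ}
    (h : ∀ j ≤ t, A j 0 = B j 0) : ∀ i j, i + j ≤ t → A j i = B j i
  | 0, j, hij => h j (by omega)
  | 1, j, hij => by rw [hA.1, hB.1, h (j + 1) (by omega)]
  | i + 2, j, hij => by
    have h₁ := eq_of_col hA hB h (i + 1) (j + 1) (by omega)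
    have h₀ := eq_of_col hA hB h i j (by omega)
    apply mul_left_cancel₀ (glam_add_two_pos m i).ne'
    rw [hA.2, hB.2, h₁, h₀]

theorem eq_of_row (hA : IsGegenbauerArray m A) (hB : IsGegenbauerArray m B) (hm : m ≠ 0)
    {t : ℕ} (h : ∀ i ≤ t, A 0 i = B 0 i) : ∀ j i, j + i ≤ t → A j i = B j i
  | 0, i, hij => h i (by omega)
  | j + 1, 0, hij => by
    have h₁ := eq_of_row hA hB hm h j 1 (by omega)
    rw [hA.1, hB.1] at h₁
    exact mul_left_cancel₀ (by exact_mod_cast hm) h₁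
  | j + 1, i + 1, hij => by
    have h₂ := eq_of_row hA hB hm h j (i + 2) (by omega)
    have h₀ := eq_of_row hA hB hm h j i (by omega)
    linear_combination hB.2 j i - hA.2 j i + glam m (i + 2) * h₂ - (glam m i - 1) * h₀

end IsGegenbauerArray

theorem isGegenbauerArray_sum {P : Type*} (m : ℕ) (F : Finset P) (w : P → ℝ) :
    IsGegenbauerArray m fun j i => ∑ p ∈ F, w p ^ j * gegen m i (w p) := by
  refine ⟨fun j => ?_, fun j i => ?_⟩
  · rw [mul_sum]
    refine sum_congr rfl fun p _ => ?_
    simp only [gegen]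
    ring
  · rw [mul_sum, mul_sum, ← sum_add_distrib]
    refine sum_congr rfl fun p _ => ?_
    linear_combination w p ^ j * glam_mul_gegen_add_two m i (w p)

/-- The array `∫ u^j Q_{m,i}(u) dσ` of the sphere functional, in closed form. -/
noncomputable def sphereArray (m j i : ℕ) : ℝ :=
  (∏ r ∈ range i, (1 - glam m r)) * j.choose i * sphereMoment (m + 2 * i) (j - i)

theorem sphereArray_zero_right (m j : ℕ) : sphereArray m j 0 = sphereMoment m j := by
  simp [sphereArray]

theorem sphereArray_zero_left (m : ℕ) {i : ℕ} (hi : 1 ≤ i) : sphereArray m 0 i = 0 := by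
  simp [sphereArray, Nat.choose_eq_zero_of_lt hi]

theorem sphereArray_one {m : ℕ} (hm : 0 < m) (j : ℕ) :
    sphereArray m j 1 = m * sphereArray m (j + 1) 0 := by
  rcases j with _ | n
  · simp [sphereArray, sphereMoment]
  · have h : (m : ℝ) + n ≠ 0 := by positivity
    simp only [sphereArray, range_one, glam, prod_singleton, CharP.cast_eq_zero, mul_zero,
      add_zero, zero_div, sub_zero, Nat.choose_one_right, Nat.cast_add, Nat.cast_one, one_mul,
      mul_one, add_tsub_cancel_right, range_zero, prod_empty, Nat.choose_zero_right, tsub_zero,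
      sphereMoment]
    rw [mul_left_comm, mul_sphereMoment hm]
    field_simp

theorem choose_add_two_mul_eq (i n : ℕ) :
    (i + n + 2).choose (i + 2) * ((i + 1) * (i + 2)) =
      (n + 1) * (n + 2) * (i + n + 2).choose i := by
  have h₁ := Nat.choose_succ_right_eq (i + n + 2) (i + 1)
  have h₀ := Nat.choose_succ_right_eq (i + n + 2) i
  rw [show i + n + 2 - (i + 1) = n + 1 by omega] at h₁
  rw [show i + n + 2 - i = n + 2 by omega] at h₀
  calc (i + n + 2).choose (i + 2) * ((i + 1) * (i + 2))
      = (i + n + 2).choose (i + 1 + 1) * (i + 1 + 1) * (i + 1) := by ring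
    _ = (i + n + 2).choose (i + 1) * (i + 1) * (n + 1) := by rw [h₁]; ring
    _ = _ := by rw [h₀]; ring

theorem glam_mul_sphereArray_add_two {m : ℕ} (hm : 0 < m) (i n : ℕ) :
    glam m (i + 2) * sphereArray m (i + (n + 2)) (i + 2) =
      sphereArray m (i + (n + 2) + 1) (i + 1) + (glam m i - 1) * sphereArray m (i + (n + 2)) i := by
  have hC₁ : ((i + n + 2).choose (i + 2) : ℝ) =
      (n + 1) * (n + 2) * (i + n + 2).choose i / ((i + 1) * (i + 2)) := by
    rw [eq_div_iff (by positivity)]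
    exact_mod_cast choose_add_two_mul_eq i n
  have hC₂ : ((i + n + 3).choose (i + 1) : ℝ) = (i + n + 3) * (i + n + 2).choose i / (i + 1) := by
    rw [eq_div_iff (by positivity)]
    exact_mod_cast (Nat.add_one_mul_choose_eq (i + n + 2) i).symm
  have hν₁ : sphereMoment (m + 2 * i + 2 + 2) n =
      (m + 2 * i + 2) * sphereMoment (m + 2 * i + 2) n / (m + 2 * i + 2 + n) := by
    rw [eq_div_iff (by positivity)]
    have := mul_sphereMoment (m := m + 2 * i + 2) (by omega) n
    push_cast at this
    linear_combination -this
  have hν₂ : sphereMoment (m + 2 * i) (n + 2) =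
      (n + 1) * sphereMoment (m + 2 * i + 2) n / (m + 2 * i) := by
    have h₁ : (m : ℝ) + 2 * i ≠ 0 := by positivity
    have h₂ : (m : ℝ) + 2 * i + n ≠ 0 := by positivity
    have := mul_sphereMoment (m := m + 2 * i) (by omega) n
    push_cast at this
    rw [sphereMoment, eq_div_iff h₁]
    field_simp
    push_cast
    linear_combination this
  have hg₂ : glam m (i + 2) = (i + 2) / (m + 2 * i + 2) := by unfold glam; push_cast; ring_nf
  have hg₁ : glam m (i + 1) = (i + 1) / (m + 2 * i) := by unfold glam; push_cast; ring_nf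
  simp only [sphereArray, prod_range_succ, hg₁, hg₂]
  rw [show i + (n + 2) = i + n + 2 by ring, show i + n + 2 + 1 = i + n + 3 by ring,
    show i + n + 2 - (i + 2) = n by omega, show i + n + 3 - (i + 1) = n + 2 by omega,
    show i + n + 2 - i = n + 2 by omega, show m + 2 * (i + 2) = m + 2 * i + 2 + 2 by ring,
    show m + 2 * (i + 1) = m + 2 * i + 2 by ring, hC₁, hC₂, hν₁, hν₂, sphereMoment]
  generalize ∏ r ∈ range i, (1 - glam m r) = c
  have h₁ : (m : ℝ) + 2 * i ≠ 0 := by positivity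
  push_cast
  field_simp
  ring

theorem isGegenbauerArray_sphereArray {m : ℕ} (hm : 0 < m) :
    IsGegenbauerArray m (sphereArray m) := by
  refine ⟨sphereArray_one hm, fun j i => ?_⟩
  rcases lt_or_ge j i with hji | hij
  · simp [sphereArray, Nat.choose_eq_zero_of_lt hji,
      Nat.choose_eq_zero_of_lt (by omega : j < i + 2),
      Nat.choose_eq_zero_of_lt (by omega : j + 1 < i + 1)]
  obtain ⟨n, rfl⟩ := Nat.exists_eq_add_of_le hij
  match n with
  | 0 =>
    simp only [sphereArray, prod_range_succ, add_zero,
      Nat.choose_eq_zero_of_lt (by omega : i < i + 2), CharP.cast_eq_zero, mul_zero, Nat.sub_self,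
      sphereMoment, mul_one, Nat.choose_self, Nat.cast_one]
    ring
  | 1 => simp [sphereArray, sphereMoment, show i + 1 + 1 - (i + 1) = 1 by omega]
  | n + 2 => exact glam_mul_sphereArray_add_two hm i n

theorem sum_pow_eq_iff_sum_gegen_eq_zero {P : Type*} (F : Finset P) (w : P → ℝ) {m : ℕ}
    (hm : 0 < m) (t : ℕ) :
    (∀ j ≤ t, ∑ p ∈ F, w p ^ j = #F * sphereMoment m j) ↔
      ∀ i, 1 ≤ i → i ≤ t → ∑ p ∈ F, gegen m i (w p) = 0 := by
  have hA := isGegenbauerArray_sum m F w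
  have hB := (isGegenbauerArray_sphereArray hm).const_mul (#F : ℝ)
  constructor
  · intro h i hi hit
    have := hA.eq_of_col hB (fun j hj => by simpa [sphereArray_zero_right, gegen] using h j hj) i 0
      (by omega)
    simpa [sphereArray_zero_left m hi] using this
  · intro h j hj
    have hrow : ∀ i ≤ t, ∑ p ∈ F, w p ^ 0 * gegen m i (w p) = #F * sphereArray m 0 i := by
      intro i hi
      rcases i with _ | i
      · simp [sphereArray, sphereMoment, gegen]
      · simpa [sphereArray_zero_left m (Nat.succ_pos i)] using h (i + 1) (by omega) hi
    simpa [sphereArray_zero_right, gegen] using hA.eq_of_row hB hm.ne' hrow j 0 (by omega)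

section ComplexDesign

open ComplexConjugate

variable {d : ℕ}

noncomputable def monomialSum (X : Finset (Fin d → ℂ)) (a b : Fin d → ℕ) : ℂ :=
  ∑ z ∈ X, (∏ i, z i ^ a i) * ∏ i, conj (z i) ^ b i

noncomputable def innerMoment (X : Finset (Fin d → ℂ)) (k l : ℕ) : ℂ :=
  ∑ x ∈ X, ∑ y ∈ X, cInner x y ^ k * conj (cInner x y) ^ l

theorem conj_cInner (x y : Fin d → ℂ) : conj (cInner x y) = cInner y x := by
  simp only [cInner, map_sum, map_mul, Complex.conj_conj, mul_comm]

theorem cInner_pow (x y : Fin d → ℂ) (k : ℕ) :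
    cInner x y ^ k = ∑ a ∈ piAntidiag univ k,
      (Nat.multinomial univ a : ℂ) * ∏ i, (conj (x i) * y i) ^ a i := by
  rw [cInner, sum_pow_eq_sum_piAntidiag]

theorem innerMoment_eq_sum (X : Finset (Fin d → ℂ)) (k l : ℕ) :
    innerMoment X k l = ∑ a ∈ piAntidiag univ k, ∑ b ∈ piAntidiag univ l,
      (Nat.multinomial univ a * Nat.multinomial univ b : ℂ) *
        (conj (monomialSum X a b) * monomialSum X a b) := by
  have hxy : ∀ x y : Fin d → ℂ, cInner x y ^ k * conj (cInner x y) ^ l =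
      ∑ a ∈ piAntidiag univ k, ∑ b ∈ piAntidiag univ l,
        (Nat.multinomial univ a * Nat.multinomial univ b : ℂ) *
          (conj ((∏ i, x i ^ a i) * ∏ i, conj (x i) ^ b i) *
            ((∏ i, y i ^ a i) * ∏ i, conj (y i) ^ b i)) := by
    intro x y
    rw [conj_cInner, cInner_pow, cInner_pow, sum_mul_sum]
    refine sum_congr rfl fun a _ => sum_congr rfl fun b _ => ?_
    simp only [map_mul, map_prod, map_pow, Complex.conj_conj, mul_pow, prod_mul_distrib]
    ring
  simp only [innerMoment, hxy, monomialSum, map_sum, sum_mul_sum]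
  simp only [mul_sum]
  exact (sum_congr rfl fun x _ => sum_comm.trans (sum_congr rfl fun a _ => sum_comm)).trans
    (sum_comm.trans (sum_congr rfl fun a _ => sum_comm))

theorem card_piAntidiag_univ (k : ℕ) :
    #(piAntidiag (univ : Finset (Fin d)) k) = (d + k - 1).choose k := by
  rw [← map_sym_eq_piAntidiag, card_map, sym_univ, card_univ, Sym.card_sym_eq_choose,
    Fintype.card_fin]

theorem multinomial_mul_monomialAvg_self (hd : 1 ≤ d) {k : ℕ} {a : Fin d → ℕ}
    (ha : a ∈ piAntidiag univ k) :
    (Nat.multinomial univ a : ℂ) * monomialAvg d a a = ((d + k - 1).choose k : ℂ)⁻¹ := by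
  have hsum : ∑ i, a i = k := (mem_piAntidiag.1 ha).1
  have hspec : (∏ i, ((a i).factorial : ℂ)) * Nat.multinomial univ a = k.factorial := by
    rw [← hsum]; exact_mod_cast Nat.multinomial_spec univ a
  have hchoose : ((d + k - 1).choose k : ℂ) * k.factorial * (d - 1).factorial =
      (d + k - 1).factorial := by
    have := Nat.choose_mul_factorial_mul_factorial (show k ≤ d + k - 1 by omega)
    rw [show d + k - 1 - k = d - 1 by omega] at this
    exact_mod_cast this
  have hC : ((d + k - 1).choose k : ℂ) ≠ 0 := by
    exact_mod_cast (Nat.choose_pos (by omega)).ne'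
  have hk : (k.factorial : ℂ) ≠ 0 := by exact_mod_cast k.factorial_ne_zero
  have hd' : ((d - 1).factorial : ℂ) ≠ 0 := by exact_mod_cast (d - 1).factorial_ne_zero
  rw [monomialAvg, if_pos rfl, hsum, ← hchoose]
  field_simp
  linear_combination hspec

theorem sum_multinomial_mul_monomialAvg_self (hd : 1 ≤ d) (k : ℕ) :
    ∑ a ∈ piAntidiag (univ : Finset (Fin d)) k,
      (Nat.multinomial univ a : ℂ) * monomialAvg d a a = 1 := by
  rw [sum_congr rfl fun a ha => multinomial_mul_monomialAvg_self hd ha, sum_const,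
    card_piAntidiag_univ, nsmul_eq_mul]
  exact mul_inv_cancel₀ (by exact_mod_cast (Nat.choose_pos (by omega)).ne')

theorem sum_multinomial_mul_monomialSum_self {X : Finset (Fin d → ℂ)}
    (hX : ∀ z ∈ X, cInner z z = 1) (k : ℕ) :
    ∑ a ∈ piAntidiag univ k, (Nat.multinomial univ a : ℂ) * monomialSum X a a = #X := by
  have hz : ∀ z ∈ X, ∑ a ∈ piAntidiag univ k,
      (Nat.multinomial univ a : ℂ) * ((∏ i, z i ^ a i) * ∏ i, conj (z i) ^ a i) = 1 := by
    intro z hz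
    rw [← one_pow k, ← hX z hz, cInner_pow]
    refine sum_congr rfl fun a _ => ?_
    simp only [mul_pow, prod_mul_distrib, mul_comm]
  simp only [monomialSum, mul_sum]
  rw [sum_comm, sum_congr rfl hz, sum_const, nsmul_one]

theorem conj_monomialAvg (a b : Fin d → ℕ) : conj (monomialAvg d a b) = monomialAvg d a b := by
  unfold monomialAvg
  split_ifs <;> simp

theorem sum_sum_multinomial_mul_monomialAvg (hd : 1 ≤ d) (k l : ℕ)
    (f : (Fin d → ℕ) → (Fin d → ℕ) → ℂ) :
    ∑ a ∈ piAntidiag univ k, ∑ b ∈ piAntidiag univ l,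
        (Nat.multinomial univ a * Nat.multinomial univ b : ℂ) * monomialAvg d a b * f a b =
      if k = l then ((d + k - 1).choose k : ℂ)⁻¹ *
        ∑ a ∈ piAntidiag univ k, (Nat.multinomial univ a : ℂ) * f a a else 0 := by
  split_ifs with hkl
  · subst hkl
    rw [mul_sum]
    refine sum_congr rfl fun a ha => ?_
    rw [sum_eq_single_of_mem a ha fun b _ hba => by rw [monomialAvg, if_neg hba.symm]; ring,
      ← multinomial_mul_monomialAvg_self hd ha]
    ring
  · refine sum_eq_zero fun a ha => sum_eq_zero fun b hb => ?_
    have hab : a ≠ b := by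
      rintro rfl
      exact hkl ((mem_piAntidiag.1 ha).1.symm.trans (mem_piAntidiag.1 hb).1)
    rw [monomialAvg, if_neg hab]
    ring

noncomputable def designDefect (X : Finset (Fin d → ℂ)) (a b : Fin d → ℕ) : ℂ :=
  monomialSum X a b - #X * monomialAvg d a b

noncomputable def defectEnergy (X : Finset (Fin d → ℂ)) (k l : ℕ) : ℝ :=
  ∑ a ∈ piAntidiag univ k, ∑ b ∈ piAntidiag univ l,
    (Nat.multinomial univ a * Nat.multinomial univ b : ℝ) * Complex.normSq (designDefect X a b)

theorem sum_multinomial_mul_designDefect_self (hd : 1 ≤ d) {X : Finset (Fin d → ℂ)}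
    (hX : ∀ z ∈ X, cInner z z = 1) (k : ℕ) :
    ∑ a ∈ piAntidiag univ k, (Nat.multinomial univ a : ℂ) * designDefect X a a = 0 := by
  simp only [designDefect, mul_sub, sum_sub_distrib, mul_left_comm _ (#X : ℂ), ← mul_sum,
    sum_multinomial_mul_monomialSum_self hX, sum_multinomial_mul_monomialAvg_self hd, mul_one,
    sub_self]

theorem innerMoment_eq (hd : 1 ≤ d) {X : Finset (Fin d → ℂ)} (hX : ∀ z ∈ X, cInner z z = 1)
    (k l : ℕ) :
    innerMoment X k l = defectEnergy X k l +
      (#X : ℂ) ^ 2 * if k = l then ((d + k - 1).choose k : ℂ)⁻¹ else 0 := by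
  have hexp : ∀ a b, (Nat.multinomial univ a * Nat.multinomial univ b : ℂ) *
      (conj (monomialSum X a b) * monomialSum X a b) =
        (Nat.multinomial univ a * Nat.multinomial univ b : ℂ) *
          Complex.normSq (designDefect X a b) +
        (Nat.multinomial univ a * Nat.multinomial univ b : ℂ) * monomialAvg d a b *
          (#X * (designDefect X a b + conj (designDefect X a b) + #X * monomialAvg d a b)) := by
    intro a b
    have hM : monomialSum X a b = designDefect X a b + #X * monomialAvg d a b := by
      rw [designDefect]; ring
    rw [Complex.normSq_eq_conj_mul_self, hM, map_add, map_mul, conj_monomialAvg, map_natCast]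
    ring
  simp only [innerMoment_eq_sum, hexp, sum_add_distrib, sum_sum_multinomial_mul_monomialAvg hd]
  push_cast [defectEnergy]
  congr 1
  split_ifs with hkl
  · subst hkl
    have hS := sum_multinomial_mul_designDefect_self hd hX k
    have hS' := congrArg conj hS
    simp only [map_sum, map_mul, map_natCast, map_zero] at hS'
    simp only [mul_add, sum_add_distrib, mul_left_comm _ (#X : ℂ), ← mul_sum, hS, hS',
      sum_multinomial_mul_monomialAvg_self hd]
    ring
  · rw [mul_zero]

theorem two_pow_mul_sum_re_pow (X : Finset (Fin d → ℂ)) (j : ℕ) :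
    (2 : ℂ) ^ j * ∑ p ∈ X ×ˢ X, ((cInner p.1 p.2).re : ℂ) ^ j =
      ∑ k ∈ range (j + 1), (j.choose k : ℂ) * innerMoment X k (j - k) := by
  have hw : ∀ w : ℂ, (2 : ℂ) ^ j * (w.re : ℂ) ^ j =
      ∑ k ∈ range (j + 1), (j.choose k : ℂ) * (w ^ k * conj w ^ (j - k)) := by
    intro w
    rw [← mul_pow, show (2 : ℂ) * w.re = w + conj w by rw [Complex.add_conj]; push_cast; ring,
      add_pow]
    exact sum_congr rfl fun k _ => by ring
  simp only [mul_sum, hw, sum_product, innerMoment]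
  exact (sum_congr rfl fun x _ => sum_comm).trans sum_comm

theorem centralBinom_eq_mul_sphereMoment (hd : 1 ≤ d) (s : ℕ) :
    (s.centralBinom : ℝ) = 4 ^ s * sphereMoment (2 * d) (2 * s) * (d + s - 1).choose s := by
  induction s with
  | zero => simp [sphereMoment]
  | succ s ih =>
    have hB : ((s + 1 : ℕ) : ℝ) * (s + 1).centralBinom = 2 * (2 * s + 1) * s.centralBinom := by
      exact_mod_cast Nat.succ_mul_centralBinom_succ s
    have hC := Nat.add_one_mul_choose_eq (d + s - 1) s
    rw [show d + s - 1 + 1 = d + s by omega] at hC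
    have hC' : ((d + s : ℕ) : ℝ) * (d + s - 1).choose s = (d + s).choose (s + 1) * (s + 1) := by
      exact_mod_cast hC
    have hds : (2 * d : ℝ) + 2 * s ≠ 0 := by positivity
    apply mul_left_cancel₀ (show ((s + 1 : ℕ) : ℝ) ≠ 0 by positivity)
    rw [hB, ih, show 2 * (s + 1) = 2 * s + 2 by ring, sphereMoment,
      show d + (s + 1) - 1 = d + s by omega]
    push_cast at hC' ⊢
    field_simp
    linear_combination (4 ^ (s + 1) * sphereMoment (2 * d) (2 * s)) * hC'

theorem sum_choose_mul_ite_eq_two_pow_mul_sphereMoment (hd : 1 ≤ d) (j : ℕ) :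
    ∑ k ∈ range (j + 1),
        (j.choose k : ℝ) * (if k = j - k then ((d + k - 1).choose k : ℝ)⁻¹ else 0) =
      2 ^ j * sphereMoment (2 * d) j := by
  obtain ⟨s, rfl | rfl⟩ := Nat.even_or_odd' j
  · rw [sum_eq_single_of_mem s (mem_range.2 (by omega))
        fun k _ hks => by rw [if_neg (by omega), mul_zero],
      if_pos (by omega), ← Nat.centralBinom_eq_two_mul_choose, centralBinom_eq_mul_sphereMoment hd,
      pow_mul, show (2 : ℝ) ^ 2 = 4 by norm_num]
    have hC : ((d + s - 1).choose s : ℝ) ≠ 0 := by exact_mod_cast (Nat.choose_pos (by omega)).ne'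
    field_simp
  · rw [sphereMoment_two_mul_add_one, mul_zero]
    exact sum_eq_zero fun k _ => by rw [if_neg (by omega), mul_zero]

theorem two_pow_mul_sum_re_pow_sub (hd : 1 ≤ d) {X : Finset (Fin d → ℂ)}
    (hX : ∀ z ∈ X, cInner z z = 1) (j : ℕ) :
    2 ^ j * (∑ p ∈ X ×ˢ X, (cInner p.1 p.2).re ^ j - #(X ×ˢ X) * sphereMoment (2 * d) j) =
      ∑ k ∈ range (j + 1), (j.choose k : ℝ) * defectEnergy X k (j - k) := by
  have h := two_pow_mul_sum_re_pow X j
  have hR : ∑ k ∈ range (j + 1), (j.choose k : ℂ) * innerMoment X k (j - k) =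
      ((∑ k ∈ range (j + 1), (j.choose k : ℝ) * (defectEnergy X k (j - k) +
        #X ^ 2 * if k = j - k then ((d + k - 1).choose k : ℝ)⁻¹ else 0) : ℝ) : ℂ) := by
    push_cast
    refine sum_congr rfl fun k _ => ?_
    rw [innerMoment_eq hd hX]
    split_ifs <;> push_cast <;> ring
  rw [hR] at h
  have h' : (2 : ℝ) ^ j * ∑ p ∈ X ×ˢ X, (cInner p.1 p.2).re ^ j =
      ∑ k ∈ range (j + 1), (j.choose k : ℝ) * (defectEnergy X k (j - k) +
        #X ^ 2 * if k = j - k then ((d + k - 1).choose k : ℝ)⁻¹ else 0) := by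
    exact_mod_cast h
  rw [mul_sub, h']
  simp only [mul_add, sum_add_distrib, mul_left_comm _ ((#X : ℝ) ^ 2), ← mul_sum,
    sum_choose_mul_ite_eq_two_pow_mul_sphereMoment hd, card_product]
  push_cast
  ring

theorem defectEnergy_nonneg (X : Finset (Fin d → ℂ)) (k l : ℕ) : 0 ≤ defectEnergy X k l :=
  sum_nonneg fun _ _ => sum_nonneg fun _ _ => mul_nonneg (by positivity) (Complex.normSq_nonneg _)

theorem defectEnergy_eq_zero_iff (X : Finset (Fin d → ℂ)) (k l : ℕ) :
    defectEnergy X k l = 0 ↔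
      ∀ a ∈ piAntidiag univ k, ∀ b ∈ piAntidiag univ l, designDefect X a b = 0 := by
  have hterm : ∀ a b : Fin d → ℕ,
      0 ≤ (Nat.multinomial univ a * Nat.multinomial univ b : ℝ) *
        Complex.normSq (designDefect X a b) :=
    fun _ _ => mul_nonneg (by positivity) (Complex.normSq_nonneg _)
  rw [defectEnergy, sum_eq_zero_iff_of_nonneg fun a _ => sum_nonneg fun b _ => hterm a b]
  refine forall₂_congr fun a _ => ?_
  rw [sum_eq_zero_iff_of_nonneg fun b _ => hterm a b]
  refine forall₂_congr fun b _ => ?_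
  have hpos : (Nat.multinomial univ a * Nat.multinomial univ b : ℝ) ≠ 0 := by
    have := Nat.multinomial_pos univ a
    have := Nat.multinomial_pos univ b
    positivity
  rw [mul_eq_zero, or_iff_right hpos, Complex.normSq_eq_zero]

theorem isDesign_iff_designDefect (X : Finset (Fin d → ℂ)) (t : ℕ) :
    IsDesign d X ((range (t + 1) ×ˢ range (t + 1)).filter fun p => p.1 + p.2 ≤ t) ↔
      ∀ a b : Fin d → ℕ, ∑ i, a i + ∑ i, b i ≤ t → designDefect X a b = 0 := by
  simp only [IsDesign, designDefect, sub_eq_zero, mem_filter, mem_product, mem_range]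
  constructor
  · intro h a b hab
    exact h (∑ i, a i, ∑ i, b i) ⟨⟨by omega, by omega⟩, hab⟩ a b rfl rfl
  · rintro h ⟨k, l⟩ ⟨-, hkl⟩ a b rfl rfl
    exact h a b hkl

theorem isDesign_iff_sum_re_pow (hd : 1 ≤ d) {X : Finset (Fin d → ℂ)}
    (hX : ∀ z ∈ X, cInner z z = 1) (t : ℕ) :
    IsDesign d X ((range (t + 1) ×ˢ range (t + 1)).filter fun p => p.1 + p.2 ≤ t) ↔
      ∀ j ≤ t, ∑ p ∈ X ×ˢ X, (cInner p.1 p.2).re ^ j = #(X ×ˢ X) * sphereMoment (2 * d) j := by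
  have key := two_pow_mul_sum_re_pow_sub hd hX
  rw [isDesign_iff_designDefect]
  constructor
  · intro h j hj
    have hzero : ∑ k ∈ range (j + 1), (j.choose k : ℝ) * defectEnergy X k (j - k) = 0 := by
      refine sum_eq_zero fun k hk => ?_
      rw [(defectEnergy_eq_zero_iff X k (j - k)).2 fun a ha b hb => h a b ?_, mul_zero]
      rw [(mem_piAntidiag.1 ha).1, (mem_piAntidiag.1 hb).1]
      have := mem_range.1 hk
      omega
    have hj := key j
    rw [hzero, mul_eq_zero] at hj
    exact sub_eq_zero.1 (hj.resolve_left (by positivity))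
  · intro h a b hab
    have hzero := key (∑ i, a i + ∑ i, b i)
    rw [h _ hab, sub_self, mul_zero, eq_comm, sum_eq_zero_iff_of_nonneg
      fun k _ => mul_nonneg (Nat.cast_nonneg _) (defectEnergy_nonneg X _ _)] at hzero
    have hterm := hzero (∑ i, a i) (mem_range.2 (by omega))
    rw [Nat.add_sub_cancel_left, mul_eq_zero,
      or_iff_right (by exact_mod_cast (Nat.choose_pos (by omega)).ne')] at hterm
    exact (defectEnergy_eq_zero_iff X _ _).1 hterm a (mem_piAntidiag.2 ⟨rfl, by simp⟩)
      b (mem_piAntidiag.2 ⟨rfl, by simp⟩)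

end ComplexDesign

theorem phi_injective (d : ℕ) : Function.Injective (phi d) := fun _ _ h =>
  funext fun i => Complex.ext (congrFun h (i, false)) (congrFun h (i, true))

theorem sum_phi_mul_phi {d : ℕ} (x y : Fin d → ℂ) :
    ∑ p, phi d x p * phi d y p = (cInner x y).re := by
  simp only [phi, cInner, Complex.re_sum, Fintype.sum_prod_type, Fintype.sum_bool, if_true,
    Bool.false_eq_true, if_false, Complex.mul_re, Complex.conj_re, Complex.conj_im]
  exact sum_congr rfl fun _ _ => by ring

theorem sum_image_phi {d : ℕ} (X : Finset (Fin d → ℂ)) (g : ℝ → ℝ) :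
    ∑ u ∈ X.image (phi d), ∑ v ∈ X.image (phi d), g (∑ p, u p * v p) =
      ∑ p ∈ X ×ˢ X, g (cInner p.1 p.2).re := by
  rw [sum_product, sum_image fun _ _ _ _ h => phi_injective d h]
  refine sum_congr rfl fun x _ => ?_
  rw [sum_image fun _ _ _ _ h => phi_injective d h]
  simp only [sum_phi_mul_phi]

theorem stmt_5_general {d : ℕ} (hd : 1 ≤ d) (X : Finset (Fin d → ℂ))
    (hXsphere : ∀ x ∈ X, cInner x x = 1) (t : ℕ) :
    IsDesign d X
        (((Finset.range (t + 1)) ×ˢ (Finset.range (t + 1))).filter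
          fun p => p.1 + p.2 ≤ t) ↔
      ∀ i : ℕ, 1 ≤ i → i ≤ t →
        ∑ u ∈ X.image (phi d), ∑ v ∈ X.image (phi d),
          gegen (2 * d) i (∑ p : Fin d × Bool, u p * v p) = 0 := by
  rw [isDesign_iff_sum_re_pow hd hXsphere,
    sum_pow_eq_iff_sum_gegen_eq_zero _ _ (by omega : 0 < 2 * d)]
  simp only [sum_image_phi]

/-- `X ⊆ Ω(d)` is a complex spherical `{(k,l) : k+l ≤ t}`-design iff
`φ(X)` is a real spherical `t`-design on `S^{2d-1}` (Gegenbauer characterization). -/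
theorem stmt_5 {d : ℕ} (hd : 1 ≤ d) (X : Finset (Fin d → ℂ)) (hXne : X.Nonempty)
    (hXsphere : ∀ x ∈ X, cInner x x = 1) (t : ℕ) (ht : 1 ≤ t) :
    IsDesign d X
        (((Finset.range (t + 1)) ×ˢ (Finset.range (t + 1))).filter
          fun p => p.1 + p.2 ≤ t) ↔
      ∀ i : ℕ, 1 ≤ i → i ≤ t →
        ∑ u ∈ X.image (phi d), ∑ v ∈ X.image (phi d),
          gegen (2 * d) i (∑ p : Fin d × Bool, u p * v p) = 0 :=
  stmt_5_general hd X hXsphere t
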